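/- Let k ≥ 2, q ≥ 1 and π ∈ 𝕊_{k−1}. Then the total number of edges of the graph G^π_{k,q} equals Σ_{i=1}^{⌈(k−1)/2⌉} cs_i(π) · C(q+k−2−|S(π)|−i, k−1). -/

import Mathlib

open Finset

attribute [local instance] Classical.propDecidable

noncomputable section

/-- `π` is a permutation of `{1,…,k-1}` given in one-line notation
(`π p` is the entry at position `p`), normalized to `0` outside `[1,k-1]`. -/
def OneLine (k : ℕ) (π : ℕ → ℕ) : Prop :=
  Set.BijOn π (Set.Icc 1 (k - 1)) (Set.Icc 1 (k - 1)) ∧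
    ∀ p, p ∉ Set.Icc 1 (k - 1) → π p = 0

/-- The set `S(π)` of adjacent inversions of `π`:
those `i ∈ [1,k-2]` such that `i+1` appears before `i` in `π`. -/
def adjInvF (k : ℕ) (π : ℕ → ℕ) : Finset ℕ :=
  (Finset.Icc 1 (k - 2)).filter fun i =>
    ∃ p ∈ Finset.Icc 1 (k - 1), ∃ r ∈ Finset.Icc 1 (k - 1),
      p < r ∧ π p = i + 1 ∧ π r = i

/-- `W^π_{k,q}`: weakly increasing `(k-1)`-tuples with entries in `[0,q-1]`
that are strictly increasing at every adjacent inversion of `π`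
(vectors are functions `ℕ → ℕ` supported on `[1,k-1]`). -/
def W (k q : ℕ) (π : ℕ → ℕ) : Set (ℕ → ℕ) :=
  {v | (∀ i, i ∉ Finset.Icc 1 (k - 1) → v i = 0) ∧
       (∀ i ∈ Finset.Icc 1 (k - 1), v i ≤ q - 1) ∧
       (∀ i, 1 ≤ i → i + 1 ≤ k - 1 → v i ≤ v (i + 1)) ∧
       (∀ i ∈ adjInvF k π, v i < v (i + 1))}

/-- `x + e_{π_a} + e_{π_{a+1}} + ⋯ + e_{π_{b-1}}`. -/
def shift (π : ℕ → ℕ) (a b : ℕ) (x : ℕ → ℕ) : ℕ → ℕ :=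
  fun i => x i + if i ∈ (Finset.Icc a (b - 1)).image π then 1 else 0

/-- Adjacency in the graph `G^π_{k,q}`: one vertex is obtained from the other
by adding `e_{π_a} + ⋯ + e_{π_{b-1}}` for some `1 ≤ a < b ≤ k`. -/
def AdjRel (k : ℕ) (π : ℕ → ℕ) (x y : ℕ → ℕ) : Prop :=
  ∃ a b, 1 ≤ a ∧ a < b ∧ b ≤ k ∧ (y = shift π a b x ∨ x = shift π a b y)

/-- The number of maximal blocks of consecutive integers of a finite set `T ⊆ ℕ`. -/
def numBlocks (T : Finset ℕ) : ℕ := (T.filter fun t => t + 1 ∉ T).card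

/-- `cs_i(π)`: the number of pairs `1 ≤ a < b ≤ k` such that
`T_{a,b} = {π_a,…,π_{b-1}}` decomposes into exactly `i` maximal blocks
of consecutive integers. -/
def cs (k : ℕ) (π : ℕ → ℕ) (i : ℕ) : ℕ :=
  ((Finset.Icc 1 k ×ˢ Finset.Icc 1 k).filter fun p =>
    p.1 < p.2 ∧ numBlocks ((Finset.Icc p.1 (p.2 - 1)).image π) = i).card

/-- For `i < j`, `{i,j}` is an edge of `G_π` iff `{i,i+1,…,j-1}` occurs as
a set of consecutive entries of `π`. -/
def GpiEdge (k : ℕ) (π : ℕ → ℕ) (i j : ℕ) : Prop :=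
  ∃ a, 1 ≤ a ∧ a + (j - i) ≤ k ∧
    (Finset.Icc a (a + (j - i) - 1)).image π = Finset.Icc i (j - 1)

/-- Unordered adjacency in `G_π`. -/
def GpiAdjU (k : ℕ) (π : ℕ → ℕ) (i j : ℕ) : Prop :=
  (i < j ∧ GpiEdge k π i j) ∨ (j < i ∧ GpiEdge k π j i)

/-- The position of the value `v` in the one-line notation of `π`. -/
def posOf (k : ℕ) (π : ℕ → ℕ) (v : ℕ) : ℕ :=
  if h : ((Finset.Icc 1 (k - 1)).filter fun t => π t = v).Nonempty then
    ((Finset.Icc 1 (k - 1)).filter fun t => π t = v).min' h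
  else 0

/-- The rotation `r` on one-line permutations: if `π = π₁…π_{t-1}(k-1)π_{t+1}…π_{k-1}`,
then `r(π) = (π_{t+1}+1)…(π_{k-1}+1) 1 (π₁+1)…(π_{t-1}+1)`. -/
def rot (k : ℕ) (π : ℕ → ℕ) : ℕ → ℕ := fun p =>
  if p ∉ Finset.Icc 1 (k - 1) then 0
  else if p < k - posOf k π (k - 1) then π (posOf k π (k - 1) + p) + 1
  else if p = k - posOf k π (k - 1) then 1
  else π (p - (k - posOf k π (k - 1))) + 1

/-- The reflection `s` on one-line permutations: if `π = π₁…π_{i-1} 1 π_{i+1}…π_{k-1}`,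
then `s(π) = (k+1-π_{i-1})…(k+1-π₁) 1 (k+1-π_{k-1})…(k+1-π_{i+1})`. -/
def srefl (k : ℕ) (π : ℕ → ℕ) : ℕ → ℕ := fun p =>
  if p ∉ Finset.Icc 1 (k - 1) then 0
  else if p < posOf k π 1 then k + 1 - π (posOf k π 1 - p)
  else if p = posOf k π 1 then 1
  else k + 1 - π (k + posOf k π 1 - p)

/-- The rotation `ρ` of the vertex set `{1,…,k}`. -/
def rotV (k i : ℕ) : ℕ := if i < k then i + 1 else 1

/-- The reflection `σ` of the vertex set `{1,…,k}`. -/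
def sreflV (k i : ℕ) : ℕ := if i = 1 then 1 else k + 2 - i

/-- The maximal sorted family `(S₁,…,S_k)` associated with `σ`, `0`-indexed:
`sortedFam k σ (i-1) = S_i`. -/
def sortedFam (k : ℕ) (σ : ℕ → ℕ) : ℕ → Finset ℕ
  | 0 => insert 1 ((adjInvF k σ).image (· + 1))
  | j + 1 => insert (σ (j + 1) + 1) ((sortedFam k σ j).erase (σ (j + 1)))

/-- `ear(π)`. -/
def ear (k : ℕ) (π : ℕ → ℕ) : ℕ :=
  ((Finset.Icc 1 (k - 2)).filter fun i => π (i + 1) = π i + 1 ∨ π i = π (i + 1) + 1).card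
    + (({1, k - 1} : Finset ℕ) ∩ ({π 1, π (k - 1)} : Finset ℕ)).card

/-- `ε_i(π) = 1` if `i-1 ∈ S(π)` and `0` otherwise. -/
def eps (k : ℕ) (π : ℕ → ℕ) (i : ℕ) : ℕ := if i - 1 ∈ adjInvF k π then 1 else 0

/-- Extension of a vector with the conventions `x_k = q-1` (`x₀ = 0` holds by
the normalization of vectors in `W^π_{k,q}`). -/
def xext (k q : ℕ) (x : ℕ → ℕ) (i : ℕ) : ℕ := if i = k then q - 1 else x i

/-- The label list `L^π(x) = {i ∈ [1,k] : x_{i-1} < x_i - ε_i(π)}`. -/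
def labels (k q : ℕ) (π : ℕ → ℕ) (x : ℕ → ℕ) : Finset ℕ :=
  (Finset.Icc 1 k).filter fun i => xext k q x (i - 1) + eps k π i < xext k q x i

/-- A Sperner labeling of `G^π_{k,q}`. -/
def IsSperner (k q : ℕ) (π : ℕ → ℕ) (f : (ℕ → ℕ) → ℕ) : Prop :=
  (∀ x ∈ W k q π, f x = 0 ∨ f x ∈ labels k q π x) ∧
  (∀ x ∈ W k q π, ∀ y ∈ W k q π, AdjRel k π x y → f x = f y ∨ f x = 0 ∨ f y = 0)

/-- The entry `w` appears between the entries `u` and `v` in `π`. -/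
def Between (k : ℕ) (π : ℕ → ℕ) (u v w : ℕ) : Prop :=
  (posOf k π u < posOf k π w ∧ posOf k π w < posOf k π v) ∨
  (posOf k π v < posOf k π w ∧ posOf k π w < posOf k π u)

/-- A good set of colors for `π`. -/
def GoodSet (k : ℕ) (π : ℕ → ℕ) (C : Finset ℕ) : Prop :=
  C ⊆ Finset.Icc 1 k ∧
  (∀ i ∈ C, ∀ j ∈ C, i ≠ j → ¬ GpiAdjU k π i j) ∧
  (∀ a ∈ C, ∀ b ∈ C, 1 < a → a < b → b < k →
      ((Between k π (a - 1) b a ∨ Between k π (a - 1) b (b - 1)) ∧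
       (Between k π (b - 1) a (a - 1) ∨ Between k π (b - 1) a b))) ∧
  (1 ∈ C → ∀ b ∈ C, b ≠ 1 → Between k π 1 (b - 1) b) ∧
  (k ∈ C → ∀ b ∈ C, b ≠ k → Between k π b (k - 1) (b - 1))

/-- `x_a - x_{a-1} - ε_a(π)`, the `a`-th coordinate of the distance map `D`. -/
def dval (k q : ℕ) (π : ℕ → ℕ) (x : ℕ → ℕ) (a : ℕ) : ℕ :=
  xext k q x a - xext k q x (a - 1) - eps k π a

/-- The distance coloring determined by a set of colors `C`:
`x` gets color `a ∈ C` if `dval x a` is the unique maximum of `dval x` on `C`,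
and `0` otherwise. -/
def dcol (k q : ℕ) (π : ℕ → ℕ) (C : Finset ℕ) (x : ℕ → ℕ) : ℕ :=
  if h : ∃ a ∈ C, ∀ b ∈ C, b ≠ a → dval k q π x b < dval k q π x a then h.choose else 0

/-!
An edge of `G^π_{k,q}` is a pair `{x, x + 1_T}` with `T = T_{a,b}`; distinct pairs `(a, b)` give
distinct sets `T`, hence disjoint sets of edges. For a fixed `T`, both `x` and `x + 1_T` lie in
`W^π_{k,q}` exactly when `0 = x₀, x₁, …, x_{k-1}, x_k = q - 1` increases by at least `g i` at every
step `i → i + 1`, where `g i` counts whether `i ∈ S(π)` and whether `i` ends a block of `T`; these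
gaps add up to `|S(π)| + (number of blocks of T)`. Replacing `x j` by
`x j + j - (g 0 + ⋯ + g (j-1))` turns such chains into strictly increasing sequences, i.e. into
`(k-1)`-subsets of an interval, which yields the binomial coefficient.
-/

theorem sum_range_le_of_add_le_succ {n : ℕ} {f g : ℕ → ℕ} (h0 : f 0 = 0)
    (h : ∀ i < n, f i + g i ≤ f (i + 1)) : ∀ j ≤ n, ∑ i ∈ range j, g i ≤ f j := by
  intro j hj
  induction j with
  | zero => simp [h0]
  | succ j ih =>
    rw [sum_range_succ]
    have := h j (by omega)
    have := ih (by omega)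
    omega

theorem StrictMonoOn.eqOn_of_image_Icc_eq {n : ℕ} {f f' : ℕ → ℕ}
    (hf : StrictMonoOn f (Set.Icc 1 n)) (hf' : StrictMonoOn f' (Set.Icc 1 n))
    (h : (Icc 1 n).image f = (Icc 1 n).image f') :
    Set.EqOn f f' (Set.Icc 1 n) := by
  have hmono {f : ℕ → ℕ} (hf : StrictMonoOn f (Set.Icc 1 n)) :
      StrictMono fun i : Fin n => f (i + 1) := fun i j hij =>
    hf (by simp) (by simp) (by simpa using hij)
  have hrange (f : ℕ → ℕ) : Set.range (fun i : Fin n => f (i + 1)) = (Icc 1 n).image f := by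
    ext c
    simp only [Set.mem_range, coe_image, coe_Icc, Set.mem_image, Set.mem_Icc]
    constructor
    · rintro ⟨i, rfl⟩
      exact ⟨i + 1, by omega, rfl⟩
    · rintro ⟨j, hj, rfl⟩
      exact ⟨⟨j - 1, by omega⟩, by simp only; congr 1; omega⟩
  have heq := ((hmono hf).range_inj (hmono hf')).1 (by rw [hrange, hrange, h])
  intro j hj
  simpa [show j - 1 + 1 = j by simp at hj; omega] using congrFun heq ⟨j - 1, by simp at hj; omega⟩

-- chains `0 = x 0, x 1, …, x n, x (n + 1) = m` rising by at least `g i` from `x i` to `x (i + 1)`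
def gapChains (n m : ℕ) (g : ℕ → ℕ) : Set (ℕ → ℕ) :=
  {x | (∀ i ∉ Icc 1 n, x i = 0) ∧ ∀ i ≤ n, x i + g i ≤ if i = n then m else x (i + 1)}

def gapCode (g x : ℕ → ℕ) (j : ℕ) : ℕ := x j + j - ∑ i ∈ range j, g i

def gapEncode (n : ℕ) (g x : ℕ → ℕ) : Finset ℕ := (Icc 1 n).image (gapCode g x)

def gapDecode (n : ℕ) (g u : ℕ → ℕ) (j : ℕ) : ℕ := if j ≤ n then u j + ∑ i ∈ range j, g i - j else 0

namespace gapChains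

variable {n m : ℕ} {g x : ℕ → ℕ}

theorem apply_zero (hx : x ∈ gapChains n m g) : x 0 = 0 := hx.1 0 (by simp)

theorem add_le_succ (hx : x ∈ gapChains n m g) {i : ℕ} (hi : i < n) : x i + g i ≤ x (i + 1) := by
  simpa [hi.ne] using hx.2 i hi.le

theorem add_le_top (hx : x ∈ gapChains n m g) : x n + g n ≤ m := by
  simpa using hx.2 n le_rfl

theorem sum_le (hx : x ∈ gapChains n m g) {j : ℕ} (hj : j ≤ n) : ∑ i ∈ range j, g i ≤ x j :=
  sum_range_le_of_add_le_succ (apply_zero hx) (fun _ => add_le_succ hx) j hj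

theorem sum_le_top (hx : x ∈ gapChains n m g) : ∑ i ∈ range (n + 1), g i ≤ m := by
  rw [sum_range_succ]
  have := sum_le hx le_rfl
  have := add_le_top hx
  omega

theorem monotoneOn (hx : x ∈ gapChains n m g) : MonotoneOn x (Set.Icc 0 n) :=
  monotoneOn_of_le_add_one Set.ordConnected_Icc fun i _ _ hi => by
    have := add_le_succ hx (i := i) (by simp at hi; omega)
    omega

theorem le_top (hx : x ∈ gapChains n m g) {j : ℕ} (hj : j ≤ n) : x j ≤ m := by
  have := monotoneOn hx (by simpa using hj) (by simp : n ∈ Set.Icc 0 n) hj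
  have := add_le_top hx
  omega

theorem gapCode_strictMonoOn (hx : x ∈ gapChains n m g) :
    StrictMonoOn (gapCode g x) (Set.Icc 0 n) :=
  strictMonoOn_of_lt_add_one Set.ordConnected_Icc fun i _ hi hi' => by
    simp only [Set.mem_Icc] at hi hi'
    have := sum_le hx hi.2
    have := add_le_succ hx (i := i) (by omega)
    simp only [gapCode, sum_range_succ]
    omega

theorem gapCode_le (hx : x ∈ gapChains n m g) :
    gapCode g x n ≤ m + n - ∑ i ∈ range (n + 1), g i := by
  have := sum_le hx le_rfl
  have := add_le_top hx
  simp only [gapCode, sum_range_succ]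
  omega

theorem gapCode_zero (hx : x ∈ gapChains n m g) : gapCode g x 0 = 0 := by
  simp [gapCode, apply_zero hx]

theorem mapsTo_gapEncode :
    Set.MapsTo (gapEncode n g) (gapChains n m g)
      (powersetCard n (Icc 1 (m + n - ∑ i ∈ range (n + 1), g i))) := by
  intro x hx
  have hmono := gapCode_strictMonoOn hx
  rw [mem_coe, mem_powersetCard]
  constructor
  · intro c hc
    obtain ⟨j, hj, rfl⟩ := mem_image.1 hc
    rw [mem_Icc] at hj
    have hpos := hmono (by simp) (by simp; omega) (by omega : 0 < j)
    have hle := hmono.monotoneOn (by simp; omega) (by simp) hj.2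
    rw [gapCode_zero hx] at hpos
    exact mem_Icc.2 ⟨hpos, hle.trans (gapCode_le hx)⟩
  · rw [gapEncode, card_image_of_injOn, Nat.card_Icc, Nat.add_sub_cancel]
    exact hmono.injOn.mono fun j hj => by simp at hj ⊢; omega

theorem injOn_gapEncode : Set.InjOn (gapEncode n g) (gapChains n m g) := by
  intro x hx y hy hxy
  have hsub : Set.Icc 1 n ⊆ Set.Icc 0 n := Set.Icc_subset_Icc_left (by simp)
  have hcode := ((gapCode_strictMonoOn hx).mono hsub).eqOn_of_image_Icc_eq
    ((gapCode_strictMonoOn hy).mono hsub) hxy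
  funext j
  by_cases hj : j ∈ Icc 1 n
  · have hxj := sum_le hx (j := j) (by simp at hj; omega)
    have hyj := sum_le hy (j := j) (by simp at hj; omega)
    have := hcode (by simpa using hj)
    simp only [gapCode] at this
    omega
  · rw [hx.1 j hj, hy.1 j hj]

theorem gapDecode_mem {u : ℕ → ℕ} (hG : ∑ i ∈ range (n + 1), g i ≤ m) (hu0 : u 0 = 0)
    (hu : ∀ i < n, u i < u (i + 1)) (hun : u n ≤ m + n - ∑ i ∈ range (n + 1), g i) :
    gapDecode n g u ∈ gapChains n m g := by
  have hu_ge : ∀ j ≤ n, j ≤ u j := by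
    simpa using sum_range_le_of_add_le_succ (g := fun _ => 1) hu0 hu
  refine ⟨fun j hj => ?_, fun i hi => ?_⟩
  · rcases Nat.eq_zero_or_pos j with rfl | hj0
    · simp [gapDecode, hu0]
    · simp only [gapDecode, if_neg (show ¬j ≤ n by simp at hj; omega)]
  · have hxi : gapDecode n g u i = u i + ∑ l ∈ range i, g l - i := if_pos hi
    have := hu_ge i hi
    rw [sum_range_succ] at hG hun
    split_ifs with hin
    · subst hin
      omega
    · have hxi' : gapDecode n g u (i + 1) = u (i + 1) + ∑ l ∈ range (i + 1), g l - (i + 1) :=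
        if_pos (by omega)
      have := hu i (by omega)
      rw [sum_range_succ] at hxi'
      omega

theorem gapCode_gapDecode {u : ℕ → ℕ} (hu0 : u 0 = 0) (hu : ∀ i < n, u i < u (i + 1)) {j : ℕ}
    (hj : j ≤ n) : gapCode g (gapDecode n g u) j = u j := by
  have := sum_range_le_of_add_le_succ (g := fun _ => 1) hu0 hu j hj
  simp only [sum_const, card_range, smul_eq_mul, mul_one] at this
  simp only [gapCode, gapDecode, if_pos hj]
  omega

theorem surjOn_gapEncode (hG : ∑ i ∈ range (n + 1), g i ≤ m) :
    Set.SurjOn (gapEncode n g) (gapChains n m g)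
      (powersetCard n (Icc 1 (m + n - ∑ i ∈ range (n + 1), g i))) := by
  intro C hC
  rw [mem_coe, mem_powersetCard] at hC
  obtain ⟨hCsub, hCcard⟩ := hC
  set e := C.orderEmbOfFin hCcard
  let u : ℕ → ℕ := fun j => if h : j ∈ Icc 1 n then e ⟨j - 1, by simp at h; omega⟩ else 0
  have hu_mem {j : ℕ} (hj : j ∈ Icc 1 n) : u j ∈ C := by
    simpa only [u, dif_pos hj] using C.orderEmbOfFin_mem hCcard _
  have hu0 : u 0 = 0 := by simp [u]
  have hu {i : ℕ} (hi : i < n) : u i < u (i + 1) := by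
    rcases Nat.eq_zero_or_pos i with rfl | hi0
    · simpa [hu0, Nat.lt_iff_add_one_le] using (mem_Icc.1 (hCsub (hu_mem (by simp; omega)))).1
    · simp only [u, dif_pos (show i ∈ Icc 1 n by simp; omega),
        dif_pos (show i + 1 ∈ Icc 1 n by simp; omega)]
      exact e.strictMono (Fin.mk_lt_mk.2 (by omega))
  have hun : u n ≤ m + n - ∑ i ∈ range (n + 1), g i := by
    rcases Nat.eq_zero_or_pos n with hn | hn
    · simp [hn, hu0]
    · exact (mem_Icc.1 (hCsub (hu_mem (by simp; omega)))).2
  have hx := gapDecode_mem hG hu0 (fun _ => hu) hun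
  refine ⟨_, hx, eq_of_subset_of_card_le (fun c hc => ?_) ?_⟩
  · obtain ⟨j, hj, rfl⟩ := mem_image.1 hc
    rw [gapCode_gapDecode hu0 (fun _ => hu) (by simp at hj; omega)]
    exact hu_mem hj
  · rw [hCcard, (mem_powersetCard.1 (mapsTo_gapEncode hx)).2]

theorem bijOn_gapEncode (hG : ∑ i ∈ range (n + 1), g i ≤ m) :
    Set.BijOn (gapEncode n g) (gapChains n m g)
      (powersetCard n (Icc 1 (m + n - ∑ i ∈ range (n + 1), g i))) :=
  ⟨mapsTo_gapEncode, injOn_gapEncode, surjOn_gapEncode hG⟩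

end gapChains

theorem gapChains_finite (n m : ℕ) (g : ℕ → ℕ) : (gapChains n m g).Finite :=
  Set.Finite.of_injOn gapChains.mapsTo_gapEncode gapChains.injOn_gapEncode (finite_toSet _)

theorem ncard_gapChains {n : ℕ} (hn : 0 < n) (m : ℕ) (g : ℕ → ℕ) :
    (gapChains n m g).ncard = (m + n - ∑ i ∈ range (n + 1), g i).choose n := by
  by_cases hG : ∑ i ∈ range (n + 1), g i ≤ m
  · rw [(gapChains.bijOn_gapEncode hG).ncard_eq, Set.ncard_coe_finset, card_powersetCard,
      Nat.card_Icc, Nat.add_sub_cancel]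
  · rw [Set.eq_empty_of_forall_notMem fun x hx => hG (gapChains.sum_le_top hx), Set.ncard_empty,
      Nat.choose_eq_zero_of_lt (by omega)]

def addIndicator (T : Finset ℕ) (x : ℕ → ℕ) : ℕ → ℕ := fun i => x i + if i ∈ T then 1 else 0

theorem addIndicator_mem_gapChains_iff {n m : ℕ} {g x : ℕ → ℕ} {T : Finset ℕ}
    (hT : T ⊆ Icc 1 n) :
    x ∈ gapChains n m g ∧ addIndicator T x ∈ gapChains n m g ↔
      x ∈ gapChains n m (fun i => g i + if i ∈ T ∧ i + 1 ∉ T then 1 else 0) := by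
  have hout : ∀ i ∉ Icc 1 n, i ∉ T := fun i hi h => hi (hT h)
  have htop : n + 1 ∉ T := hout _ (by simp)
  have key : ∀ i,
      (x i + g i ≤ (if i = n then m else x (i + 1)) ∧
        addIndicator T x i + g i ≤ if i = n then m else addIndicator T x (i + 1)) ↔
      x i + (g i + if i ∈ T ∧ i + 1 ∉ T then 1 else 0) ≤ if i = n then m else x (i + 1) := by
    intro i
    by_cases hin : i = n
    · subst hin
      simp only [addIndicator, if_true, htop, not_false_eq_true, and_true]
      split_ifs <;> omega
    · simp only [addIndicator, if_neg hin]
      split_ifs <;> simp_all <;> omega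
  constructor
  · rintro ⟨⟨hx0, hx⟩, -, hy⟩
    exact ⟨hx0, fun i hi => (key i).1 ⟨hx i hi, hy i hi⟩⟩
  · rintro ⟨hx0, hx⟩
    refine ⟨⟨hx0, fun i hi => ((key i).2 (hx i hi)).1⟩,
      fun i hi => by simp [addIndicator, hx0 i hi, hout i hi],
      fun i hi => ((key i).2 (hx i hi)).2⟩

theorem sum_range_ite_mem {N : ℕ} {S : Finset ℕ} (hS : S ⊆ range N) :
    ∑ i ∈ range N, (if i ∈ S then 1 else 0) = #S := by
  rw [sum_boole, filter_mem_eq_inter, inter_eq_right.2 hS, Nat.cast_id]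

theorem sum_range_ite_blockEnd {N : ℕ} {T : Finset ℕ} (hT : T ⊆ range N) :
    ∑ i ∈ range N, (if i ∈ T ∧ i + 1 ∉ T then 1 else 0) = numBlocks T := by
  rw [sum_boole, Nat.cast_id, numBlocks]
  congr 1
  ext i
  simp only [mem_filter, mem_range]
  exact ⟨fun h => h.2, fun h => ⟨mem_range.1 (hT h.1), h⟩⟩

theorem numBlocks_pos {T : Finset ℕ} (hT : T.Nonempty) : 0 < numBlocks T :=
  card_pos.2 ⟨T.max' hT, mem_filter.2 ⟨T.max'_mem hT, fun h => by
    have := T.le_max' _ h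
    omega⟩⟩

-- each block end `t` is followed by the gap `t + 1`; block ends and these gaps lie disjointly
-- in `[1, n + 1]`
theorem two_mul_numBlocks_le {n : ℕ} {T : Finset ℕ} (hT : T ⊆ Icc 1 n) :
    2 * numBlocks T ≤ n + 1 := by
  set B := T.filter fun t => t + 1 ∉ T
  have hdisj : Disjoint B (B.image (· + 1)) := by
    rw [disjoint_left]
    intro t ht ht'
    obtain ⟨s, hs, rfl⟩ := mem_image.1 ht'
    exact (mem_filter.1 hs).2 (mem_filter.1 ht).1
  have hsub : B ∪ B.image (· + 1) ⊆ Icc 1 (n + 1) := by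
    refine union_subset (fun t ht => ?_) (fun t ht => ?_)
    · have := mem_Icc.1 (hT (mem_filter.1 ht).1)
      exact mem_Icc.2 (by omega)
    · obtain ⟨s, hs, rfl⟩ := mem_image.1 ht
      have := mem_Icc.1 (hT (mem_filter.1 hs).1)
      exact mem_Icc.2 (by omega)
  calc 2 * numBlocks T = #(B ∪ B.image (· + 1)) := by
        rw [card_union_of_disjoint hdisj, card_image_of_injective _ (add_left_injective 1),
          numBlocks, two_mul]
    _ ≤ #(Icc 1 (n + 1)) := card_le_card hsub
    _ = n + 1 := by simp

theorem adjInvF_subset (k : ℕ) (π : ℕ → ℕ) : adjInvF k π ⊆ Icc 1 (k - 2) := by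
  intro i hi
  simp only [adjInvF, mem_filter] at hi
  exact hi.1

theorem W_eq_gapChains {k : ℕ} (hk : 2 ≤ k) (q : ℕ) (π : ℕ → ℕ) :
    W k q π = gapChains (k - 1) (q - 1) (fun i => if i ∈ adjInvF k π then 1 else 0) := by
  have hS {i : ℕ} (hi : i ∈ adjInvF k π) : 1 ≤ i ∧ i ≤ k - 2 := by
    simpa using adjInvF_subset k π hi
  ext x
  constructor
  · rintro ⟨hsupp, hbd, hmono, hstrict⟩
    refine ⟨hsupp, fun i hi => ?_⟩
    beta_reduce
    split_ifs with hiS hik hik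
    · have := hS hiS
      omega
    · simpa using hstrict i hiS
    · simpa using hbd i (by simp; omega)
    · rcases Nat.eq_zero_or_pos i with rfl | hi0
      · simp [hsupp 0 (by simp)]
      · simpa using hmono i hi0 (by omega)
  · intro hx
    refine ⟨hx.1, fun i hi => gapChains.le_top hx (by simp at hi; omega), fun i _ hi => ?_,
      fun i hiS => ?_⟩
    · have := gapChains.add_le_succ hx (i := i) (by omega)
      omega
    · have := gapChains.add_le_succ hx (i := i) (by have := hS hiS; omega)
      simpa [hiS] using this

theorem ncard_W_inter_addIndicator {k q : ℕ} (hk : 2 ≤ k) (hq : 1 ≤ q) (π : ℕ → ℕ)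
    {T : Finset ℕ} (hT : T ⊆ Icc 1 (k - 1)) :
    {x | x ∈ W k q π ∧ addIndicator T x ∈ W k q π}.ncard
      = (q + k - 2 - #(adjInvF k π) - numBlocks T).choose (k - 1) := by
  have hrange {U : Finset ℕ} (hU : U ⊆ Icc 1 (k - 1)) : U ⊆ range (k - 1 + 1) :=
    fun i hi => by simpa using (mem_Icc.1 (hU hi)).2
  have hSsub : adjInvF k π ⊆ Icc 1 (k - 1) :=
    (adjInvF_subset k π).trans (Icc_subset_Icc_right (by omega))
  have hset : {x | x ∈ W k q π ∧ addIndicator T x ∈ W k q π} = gapChains (k - 1) (q - 1)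
      (fun i => (if i ∈ adjInvF k π then 1 else 0) + if i ∈ T ∧ i + 1 ∉ T then 1 else 0) := by
    ext x
    rw [W_eq_gapChains hk]
    exact addIndicator_mem_gapChains_iff hT
  rw [hset, ncard_gapChains (by omega), sum_add_distrib, sum_range_ite_mem (hrange hSsub),
    sum_range_ite_blockEnd (hrange hT)]
  congr 1
  omega

def intervalPairs (k : ℕ) : Finset (ℕ × ℕ) := (Icc 1 k ×ˢ Icc 1 k).filter fun p => p.1 < p.2

theorem mem_intervalPairs {k : ℕ} {p : ℕ × ℕ} :
    p ∈ intervalPairs k ↔ 1 ≤ p.1 ∧ p.1 < p.2 ∧ p.2 ≤ k := by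
  simp only [intervalPairs, mem_filter, mem_product, mem_Icc]
  omega

theorem OneLine.image_Icc_subset {k : ℕ} {π : ℕ → ℕ} (hπ : OneLine k π) {p : ℕ × ℕ}
    (hp : p ∈ intervalPairs k) : (Icc p.1 (p.2 - 1)).image π ⊆ Icc 1 (k - 1) := by
  obtain ⟨ha, -, hb⟩ := mem_intervalPairs.1 hp
  refine image_subset_iff.2 fun i hi => ?_
  rw [mem_Icc] at hi ⊢
  exact hπ.1.mapsTo (Set.mem_Icc.2 ⟨by omega, by omega⟩)

theorem OneLine.image_Icc_inj {k : ℕ} {π : ℕ → ℕ} (hπ : OneLine k π) {a b a' b' : ℕ}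
    (ha : 1 ≤ a) (hab : a < b) (hb : b ≤ k) (ha' : 1 ≤ a') (hab' : a' < b') (hb' : b' ≤ k)
    (h : (Icc a (b - 1)).image π = (Icc a' (b' - 1)).image π) : a = a' ∧ b = b' := by
  have hinj : (↑(Icc 1 (k - 1)) : Set ℕ).InjOn π := by
    rw [coe_Icc]
    exact hπ.1.injOn
  have h := (image_eq_image_iff_of_injOn hinj (Icc_subset_Icc (by omega) (by omega))
    (Icc_subset_Icc (by omega) (by omega))).1 h
  have h1 := Finset.ext_iff.1 h a
  have h2 := Finset.ext_iff.1 h a'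
  have h3 := Finset.ext_iff.1 h (b - 1)
  have h4 := Finset.ext_iff.1 h (b' - 1)
  simp only [mem_Icc] at h1 h2 h3 h4
  omega

theorem sym2_addIndicator_inj {x y : ℕ → ℕ} {T T' : Finset ℕ} (hT : T.Nonempty)
    (h : s(x, addIndicator T x) = s(y, addIndicator T' y)) : x = y ∧ T = T' := by
  rcases Sym2.eq_iff.1 h with ⟨rfl, h⟩ | ⟨h, h'⟩
  · refine ⟨rfl, ext fun i => ?_⟩
    have := congrFun h i
    by_cases hi : i ∈ T <;> by_cases hi' : i ∈ T' <;> simp_all [addIndicator]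
  · obtain ⟨t, ht⟩ := hT
    have h1 := congrFun h t
    have h2 := congrFun h' t
    simp only [addIndicator, ht, if_true] at h1 h2
    omega

def edgesAlong (k q : ℕ) (π : ℕ → ℕ) (T : Finset ℕ) : Set (Sym2 (ℕ → ℕ)) :=
  (fun x => s(x, addIndicator T x)) '' {x | x ∈ W k q π ∧ addIndicator T x ∈ W k q π}

theorem edgeSet_eq_biUnion (k q : ℕ) (π : ℕ → ℕ) :
    {p : Sym2 (ℕ → ℕ) | ∃ x y, x ∈ W k q π ∧ y ∈ W k q π ∧ AdjRel k π x y ∧ p = s(x, y)}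
      = ⋃ p ∈ (intervalPairs k : Set (ℕ × ℕ)), edgesAlong k q π ((Icc p.1 (p.2 - 1)).image π) := by
  ext e
  simp only [Set.mem_ofPred_eq, Set.mem_iUnion, mem_coe, mem_intervalPairs, edgesAlong,
    Set.mem_image, exists_prop]
  constructor
  · rintro ⟨x, y, hx, hy, ⟨a, b, ha, hab, hb, rfl | rfl⟩, rfl⟩
    · exact ⟨(a, b), ⟨ha, hab, hb⟩, x, ⟨hx, hy⟩, rfl⟩
    · exact ⟨(a, b), ⟨ha, hab, hb⟩, y, ⟨hy, hx⟩, Sym2.eq_swap⟩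
  · rintro ⟨p, ⟨ha, hab, hb⟩, x, ⟨hx, hy⟩, rfl⟩
    exact ⟨x, _, hx, hy, ⟨p.1, p.2, ha, hab, hb, Or.inl rfl⟩, rfl⟩

theorem edgesAlong_finite {k : ℕ} (hk : 2 ≤ k) (q : ℕ) (π : ℕ → ℕ) (T : Finset ℕ) :
    (edgesAlong k q π T).Finite := by
  have hW : (W k q π).Finite := W_eq_gapChains hk q π ▸ gapChains_finite _ _ _
  exact (hW.subset fun _ hx => hx.1).image _

theorem ncard_edgesAlong {k q : ℕ} (hk : 2 ≤ k) (hq : 1 ≤ q) (π : ℕ → ℕ) {T : Finset ℕ}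
    (hT : T ⊆ Icc 1 (k - 1)) (hne : T.Nonempty) :
    (edgesAlong k q π T).ncard = (q + k - 2 - #(adjInvF k π) - numBlocks T).choose (k - 1) := by
  rw [edgesAlong, Set.InjOn.ncard_image fun x _ y _ h => (sym2_addIndicator_inj hne h).1,
    ncard_W_inter_addIndicator hk hq π hT]

theorem disjoint_edgesAlong {k q : ℕ} {π : ℕ → ℕ} {T T' : Finset ℕ} (hne : T.Nonempty)
    (h : T ≠ T') : Disjoint (edgesAlong k q π T) (edgesAlong k q π T') := by
  rw [Set.disjoint_left]
  rintro _ ⟨x, -, rfl⟩ ⟨y, -, hxy⟩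
  exact h (sym2_addIndicator_inj hne hxy.symm).2

theorem cs_eq_card_filter (k : ℕ) (π : ℕ → ℕ) (i : ℕ) :
    cs k π i =
      #((intervalPairs k).filter fun p => numBlocks ((Icc p.1 (p.2 - 1)).image π) = i) := by
  rw [cs, intervalPairs, filter_filter]

theorem image_Icc_nonempty (π : ℕ → ℕ) {a b : ℕ} (hab : a < b) :
    ((Icc a (b - 1)).image π).Nonempty :=
  ⟨π a, mem_image_of_mem _ (mem_Icc.2 ⟨le_rfl, by omega⟩)⟩

theorem OneLine.pairwiseDisjoint_edgesAlong {k : ℕ} {π : ℕ → ℕ} (hπ : OneLine k π) (q : ℕ) :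
    (intervalPairs k : Set (ℕ × ℕ)).PairwiseDisjoint
      fun p => edgesAlong k q π ((Icc p.1 (p.2 - 1)).image π) := by
  intro p hp p' hp' hne
  obtain ⟨ha, hab, hb⟩ := mem_intervalPairs.1 hp
  obtain ⟨ha', hab', hb'⟩ := mem_intervalPairs.1 hp'
  refine disjoint_edgesAlong (image_Icc_nonempty π hab) fun h => hne ?_
  obtain ⟨h1, h2⟩ := hπ.image_Icc_inj ha hab hb ha' hab' hb' h
  exact Prod.ext h1 h2

theorem OneLine.numBlocks_image_Icc_mem {k : ℕ} {π : ℕ → ℕ} (hπ : OneLine k π) {p : ℕ × ℕ}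
    (hp : p ∈ intervalPairs k) : numBlocks ((Icc p.1 (p.2 - 1)).image π) ∈ Icc 1 (k / 2) := by
  have hpos := numBlocks_pos (image_Icc_nonempty π (mem_intervalPairs.1 hp).2.1)
  have hle := two_mul_numBlocks_le (hπ.image_Icc_subset hp)
  exact mem_Icc.2 ⟨hpos, by omega⟩

theorem stmt3 (k q : ℕ) (hk : 2 ≤ k) (hq : 1 ≤ q) (π : ℕ → ℕ) (hπ : OneLine k π) :
    {p : Sym2 (ℕ → ℕ) |
        ∃ x y, x ∈ W k q π ∧ y ∈ W k q π ∧ AdjRel k π x y ∧ p = s(x, y)}.ncard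
      = ∑ i ∈ Finset.Icc 1 (k / 2),
          cs k π i * Nat.choose (q + k - 2 - (adjInvF k π).card - i) (k - 1) := by
  rw [edgeSet_eq_biUnion, (finite_toSet _).ncard_biUnion (fun p _ => edgesAlong_finite hk q π _)
      (hπ.pairwiseDisjoint_edgesAlong q), finsum_mem_coe_finset,
    sum_congr rfl fun p hp => ncard_edgesAlong hk hq π (hπ.image_Icc_subset hp)
      (image_Icc_nonempty π (mem_intervalPairs.1 hp).2.1),
    ← sum_fiberwise_of_maps_to fun p hp => hπ.numBlocks_image_Icc_mem hp]
  refine sum_congr rfl fun i _ => ?_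
  rw [sum_congr rfl fun p hp => by rw [(mem_filter.1 hp).2], sum_const, smul_eq_mul,
    cs_eq_card_filter]

end
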